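/- Let χ : G → ℝ be a nonzero character and let L ≤ K be real numbers with K − L ∈ χ(G). For L' ∈ ℝ set G_{L'} := {g ∈ G : χ(g) ≥ L'}. Then for all integers q ≥ 0 and k, l ≥ 0: reduced q-cycles at scale k on G_K bound at scale l on G_K if and only if reduced q-cycles at scale k on G_L bound at scale l on G_L. -/
import Mathlib


open Finsupp

variable {G : Type*} [Group G]

/-- Word length with respect to a generating set `X`. -/
noncomputable def wordLength (X : Finset G) (g : G) : ℕ :=
  sInf {n : ℕ | ∃ w : List G, w.length = n ∧ (∀ x ∈ w, x ∈ X ∨ x⁻¹ ∈ X) ∧ w.prod = g}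

/-- The left-invariant word metric `d(g,h) = l(g⁻¹h)`. -/
noncomputable def wordDist (X : Finset G) (g h : G) : ℕ :=
  wordLength X (g⁻¹ * h)

/-- `c` is a chain in `C_q^k(S)`: its support consists of `(q+1)`-tuples of elements of `S`
that are pairwise at distance at most `k`. -/
def VRChain (X : Finset G) (S : Set G) (q k : ℕ) (c : (Fin (q + 1) → G) →₀ ℤ) : Prop :=
  ∀ σ ∈ c.support, (∀ i, σ i ∈ S) ∧ ∀ i j, wordDist X (σ i) (σ j) ≤ k

/-- The simplicial boundary map `∂_{q+1} : ℤ[G^{q+2}] → ℤ[G^{q+1}]`. -/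
noncomputable def bnd (q : ℕ) :
    ((Fin (q + 2) → G) →₀ ℤ) →ₗ[ℤ] ((Fin (q + 1) → G) →₀ ℤ) :=
  Finsupp.lift _ ℤ _
    (fun σ => ∑ i : Fin (q + 2), ((-1 : ℤ) ^ (i : ℕ)) • Finsupp.single (σ ∘ i.succAbove) (1 : ℤ))

/-- The augmentation `ε : ℤ[G] → ℤ` sending every vertex to `1`. -/
noncomputable def aug : ((Fin 1 → G) →₀ ℤ) →ₗ[ℤ] ℤ :=
  Finsupp.lift ℤ ℤ (Fin 1 → G) (fun _ => (1 : ℤ))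

/-- Reduced `q`-cycles at scale `k` on `S` bound at scale `l` on `S`. -/
def BoundsAt (X : Finset G) (S : Set G) : ℕ → ℕ → ℕ → Prop
  | 0, k, l => ∀ z : (Fin 1 → G) →₀ ℤ, VRChain X S 0 k z → aug z = 0 →
      ∃ c : (Fin 2 → G) →₀ ℤ, VRChain X S 1 l c ∧ bnd 0 c = z
  | (q + 1), k, l => ∀ z : (Fin (q + 2) → G) →₀ ℤ, VRChain X S (q + 1) k z → bnd q z = 0 →
      ∃ c : (Fin (q + 3) → G) →₀ ℤ, VRChain X S (q + 2) l c ∧ bnd (q + 1) c = z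

/-- `S ⊆ G` is of type `FP_m`. -/
def TypeFP (X : Finset G) (S : Set G) (m : ℕ) : Prop :=
  ∀ q < m, ∀ k : ℕ, ∃ l ≥ k, BoundsAt X S q k l

/-- A character on `G` is a homomorphism to the additive reals. -/
def IsCharacter (χ : G → ℝ) : Prop :=
  ∀ g h : G, χ (g * h) = χ g + χ h

/-- Simultaneous left translation on chains, making `ℤ[G^{q+1}]` a `ℤG`-module. -/
noncomputable def lTranslate (g : G) (q : ℕ) :
    ((Fin (q + 1) → G) →₀ ℤ) →ₗ[ℤ] ((Fin (q + 1) → G) →₀ ℤ) :=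
  Finsupp.lmapDomain ℤ ℤ (fun σ i => g * σ i)

/-- A chain endomorphism of `ℤG`-complexes on `(C_q^k(G))_{q=0,…,m}` extending the identity
on `ℤ`: each `φ q` maps scale-`k` chains to scale-`k` chains, is `G`-equivariant,
satisfies `ε ∘ φ₀ = ε` and commutes with the boundary maps. -/
def IsChainEndo (X : Finset G) (k m : ℕ)
    (φ : ∀ q : ℕ, ((Fin (q + 1) → G) →₀ ℤ) →ₗ[ℤ] ((Fin (q + 1) → G) →₀ ℤ)) : Prop :=
  (∀ q ≤ m, ∀ c, VRChain X Set.univ q k c → VRChain X Set.univ q k (φ q c)) ∧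
  (∀ q ≤ m, ∀ (g : G) (c), VRChain X Set.univ q k c →
    φ q (lTranslate g q c) = lTranslate g q (φ q c)) ∧
  (∀ c : (Fin 1 → G) →₀ ℤ, VRChain X Set.univ 0 k c → aug (φ 0 c) = aug c) ∧
  (∀ q : ℕ, q + 1 ≤ m → ∀ c : (Fin (q + 2) → G) →₀ ℤ, VRChain X Set.univ (q + 1) k c →
    bnd q (φ (q + 1) c) = φ q (bnd q c))

/-- The valuation of a simplex: `v(σ) = min_i χ(g_i)` (with values in `EReal`). -/
noncomputable def vsimp (χ : G → ℝ) {q : ℕ} (σ : Fin (q + 1) → G) : EReal :=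
  ⨅ i, (χ (σ i) : EReal)

/-- The valuation of a chain: the minimum of the valuations of the simplices in its support
(`⊤` for the zero chain). -/
noncomputable def vchain (χ : G → ℝ) {q : ℕ} (c : (Fin (q + 1) → G) →₀ ℤ) : EReal :=
  ⨅ σ ∈ c.support, vsimp χ σ


section Aux

variable {G : Type*} [Group G]

lemma wordDist_mul_left (X : Finset G) (g a b : G) :
    wordDist X (g * a) (g * b) = wordDist X a b := by
  unfold wordDist
  congr 1
  group

lemma lTranslate_single (g : G) (q : ℕ) (σ : Fin (q+1) → G) (n : ℤ) :
    lTranslate g q (Finsupp.single σ n) = Finsupp.single (fun i => g * σ i) n := by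
  simp [lTranslate, Finsupp.lmapDomain_apply, Finsupp.mapDomain_single]

lemma translate_inj (g : G) (q : ℕ) :
    Function.Injective (fun (σ : Fin (q+1) → G) i => g * σ i) := by
  intro σ τ h
  funext i
  exact mul_left_cancel (congrFun h i)

lemma mem_lTranslate_support {g : G} {q : ℕ} {c : (Fin (q+1) → G) →₀ ℤ}
    {σ : Fin (q+1) → G} (h : σ ∈ (lTranslate g q c).support) :
    ∃ τ ∈ c.support, σ = fun i => g * τ i := by
  classical
  have h2 : σ ∈ c.support.image (fun σ i => g * σ i) := by
    have := Finsupp.mapDomain_support (f := fun (σ : Fin (q+1) → G) i => g * σ i) (s := c)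
    exact this h
  obtain ⟨τ, hτ, hστ⟩ := Finset.mem_image.mp h2
  exact ⟨τ, hτ, hστ.symm⟩

lemma lTranslate_lTranslate_inv (g : G) (q : ℕ) (c : (Fin (q+1) → G) →₀ ℤ) :
    lTranslate g⁻¹ q (lTranslate g q c) = c := by
  simp only [lTranslate, Finsupp.lmapDomain_apply]
  rw [← Finsupp.mapDomain_comp]
  convert Finsupp.mapDomain_id
  funext σ
  funext i
  simp [Function.comp]

lemma bnd_single (q : ℕ) (σ : Fin (q+2) → G) :
    bnd q (Finsupp.single σ (1:ℤ)) =
      ∑ i : Fin (q + 2), ((-1 : ℤ) ^ (i : ℕ)) • Finsupp.single (σ ∘ i.succAbove) (1 : ℤ) := by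
  simp [bnd]

lemma bnd_lTranslate (g : G) (q : ℕ) (c : (Fin (q+2) → G) →₀ ℤ) :
    bnd q (lTranslate g (q+1) c) = lTranslate g q (bnd q c) := by
  have h : (bnd q).comp (lTranslate g (q+1)) = (lTranslate (G := G) g q).comp (bnd q) := by
    apply Finsupp.lhom_ext
    intro σ n
    have hn : (Finsupp.single σ n : (Fin (q+2) → G) →₀ ℤ) = n • Finsupp.single σ (1:ℤ) := by
      simp
    simp only [LinearMap.comp_apply, hn, map_smul]
    congr 1
    rw [lTranslate_single, bnd_single, bnd_single, map_sum]
    refine Finset.sum_congr rfl fun i _ => ?_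
    rw [map_smul, lTranslate_single]
    rfl
  exact LinearMap.congr_fun h c

lemma aug_single (σ : Fin 1 → G) (n : ℤ) : aug (Finsupp.single σ n) = n := by
  simp [aug]

lemma aug_lTranslate (g : G) (c : (Fin 1 → G) →₀ ℤ) :
    aug (lTranslate g 0 c) = aug c := by
  have h : (aug (G := G)).comp (lTranslate g 0) = aug := by
    apply Finsupp.lhom_ext
    intro σ n
    simp only [LinearMap.comp_apply, lTranslate_single]
    exact (aug_single _ n).trans (aug_single σ n).symm
  exact LinearMap.congr_fun h c

lemma vrchain_lTranslate (X : Finset G) (S T : Set G) (q k : ℕ) (g : G)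
    (hST : ∀ s ∈ S, g * s ∈ T) (c : (Fin (q+1) → G) →₀ ℤ) (hc : VRChain X S q k c) :
    VRChain X T q k (lTranslate g q c) := by
  intro σ hσ
  obtain ⟨τ, hτ, rfl⟩ := mem_lTranslate_support hσ
  obtain ⟨h1, h2⟩ := hc τ hτ
  exact ⟨fun i => hST _ (h1 i), fun i j => by rw [wordDist_mul_left]; exact h2 i j⟩

lemma boundsAt_translate (X : Finset G) (S T : Set G) (g : G)
    (hST : ∀ s, s ∈ S ↔ g * s ∈ T) (q k l : ℕ)
    (h : BoundsAt X S q k l) : BoundsAt X T q k l := by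
  have hST1 : ∀ s ∈ S, g * s ∈ T := fun s hs => (hST s).mp hs
  have hTS : ∀ t ∈ T, g⁻¹ * t ∈ S := by
    intro t ht
    rw [hST]
    simpa using ht
  cases q with
  | zero =>
    intro z hz haug
    obtain ⟨c, hc, hbc⟩ := h (lTranslate g⁻¹ 0 z)
      (vrchain_lTranslate X T S 0 k g⁻¹ hTS z hz)
      (by rw [aug_lTranslate]; exact haug)
    refine ⟨lTranslate g 1 c, vrchain_lTranslate X S T 1 l g hST1 c hc, ?_⟩
    rw [bnd_lTranslate, hbc]
    simpa using lTranslate_lTranslate_inv g⁻¹ 0 z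
  | succ q =>
    intro z hz hcyc
    obtain ⟨c, hc, hbc⟩ := h (lTranslate g⁻¹ (q+1) z)
      (vrchain_lTranslate X T S (q+1) k g⁻¹ hTS z hz)
      (by rw [bnd_lTranslate, hcyc]; simp)
    refine ⟨lTranslate g (q+2) c, vrchain_lTranslate X S T (q+2) l g hST1 c hc, ?_⟩
    rw [bnd_lTranslate, hbc]
    simpa using lTranslate_lTranslate_inv g⁻¹ (q+1) z

end Aux

/-- If `K − L ∈ χ(G)` with `L ≤ K`, then reduced `q`-cycles at scale `k` on `G_K` bound at
scale `l` on `G_K` iff the same holds on `G_L`. -/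
theorem stmt6 {G : Type*} [Group G] (X : Finset G)
    (hX : Subgroup.closure (X : Set G) = ⊤)
    (χ : G → ℝ) (hχ : IsCharacter χ) (hne : ∃ g, χ g ≠ 0)
    (L K : ℝ) (hLK : L ≤ K) (him : ∃ g : G, χ g = K - L) :
    ∀ q k l : ℕ,
      (BoundsAt X {g : G | K ≤ χ g} q k l ↔ BoundsAt X {g : G | L ≤ χ g} q k l) := by
  obtain ⟨g₀, hg₀⟩ := him
  have hone : χ 1 = 0 := by
    have := hχ 1 1
    simp at this
    linarith
  have hinv : χ g₀⁻¹ = -(K - L) := by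
    have := hχ g₀⁻¹ g₀
    simp [hone, hg₀] at this
    linarith
  intro q k l
  constructor
  · intro h
    refine boundsAt_translate X {g : G | K ≤ χ g} {g : G | L ≤ χ g} g₀⁻¹ ?_ q k l h
    intro s
    simp only [Set.mem_setOf_eq]
    rw [hχ g₀⁻¹ s, hinv]
    constructor <;> intro hh <;> linarith
  · intro h
    refine boundsAt_translate X {g : G | L ≤ χ g} {g : G | K ≤ χ g} g₀ ?_ q k l h
    intro s
    simp only [Set.mem_setOf_eq]
    rw [hχ g₀ s, hg₀]
    constructor <;> intro hh <;> linarith
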